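/- arXiv:math/9809035 — 2 statements merged into one kernel-verified Lean document; each statement's English description precedes it below -/
import Mathlib

section
/- For any antisymmetric Hilbert–Schmidt operator T : K₁ → K₂ (T^τ = -T), the operator P_T := (P₁ + T)(P₁ + T*T)⁻¹(P₁ + T*) is a basis projection of K (i.e. P_T = P_T* = P_T², P_T + P̄_T = 1) with range ran(P₁ + T), and P₁ - P_T is Hilbert–Schmidt. -/
open ContinuousLinearMap

/-- `T` is a Hilbert–Schmidt operator. -/
def IsHS {K : Type*} [NormedAddCommGroup K] [InnerProductSpace ℂ K]
    (T : K →L[ℂ] K) : Prop :=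
  ∃ (ι : Type) (b : HilbertBasis ι ℂ K), Summable fun i => ‖T (b i)‖ ^ 2

/-- The conjugate operator `Ā = J A J` of `A` with respect to the conjugation `J`. -/
noncomputable def conjOp {K : Type*} [NormedAddCommGroup K] [InnerProductSpace ℂ K]
    (J : K ≃ₗᵢ⋆[ℂ] K) (A : K →L[ℂ] K) : K →L[ℂ] K :=
  LinearMap.mkContinuous
    { toFun := fun f => J (A (J f))
      map_add' := by intro x y; simp
      map_smul' := by intro c x; simp [map_smulₛₗ] }
    ‖A‖ fun f => by
      calc ‖J (A (J f))‖ = ‖A (J f)‖ := J.norm_map _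
        _ ≤ ‖A‖ * ‖J f‖ := A.le_opNorm _
        _ = ‖A‖ * ‖f‖ := by rw [J.norm_map]

section Aux

open scoped ENNReal NNReal

variable {K : Type*} [NormedAddCommGroup K] [InnerProductSpace ℂ K] [CompleteSpace K]

local notation "⟪" x ", " y "⟫" => @inner ℂ _ _ x y

private lemma stmt5_parseval_hasSum {ι : Type} (b : HilbertBasis ι ℂ K) (x : K) :
    HasSum (fun i => ‖⟪b i, x⟫‖ ^ 2) (‖x‖ ^ 2) := by
  have h := b.hasSum_inner_mul_inner x x
  have h2 : ∀ i, ⟪x, b i⟫ * ⟪b i, x⟫ = ((‖⟪b i, x⟫‖ ^ 2 : ℝ) : ℂ) := by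
    intro i
    rw [← inner_conj_symm x (b i), RCLike.conj_mul]
    norm_cast
  rw [funext h2, inner_self_eq_norm_sq_to_K] at h
  rw [← Complex.hasSum_ofReal]
  convert h using 2
  all_goals norm_cast

private lemma stmt5_parseval_ennreal {ι : Type} (b : HilbertBasis ι ℂ K) (x : K) :
    ∑' i, (‖⟪b i, x⟫‖₊ : ℝ≥0∞) ^ 2 = (‖x‖₊ : ℝ≥0∞) ^ 2 := by
  have h : HasSum (fun i => ‖⟪b i, x⟫‖₊ ^ 2) (‖x‖₊ ^ 2) := by
    rw [← NNReal.hasSum_coe]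
    push_cast
    exact stmt5_parseval_hasSum b x
  simpa [ENNReal.coe_pow] using ENNReal.tsum_coe_eq h

private lemma stmt5_summable_iff {ι : Type} (b : HilbertBasis ι ℂ K) (S : K →L[ℂ] K) :
    (Summable fun i => ‖S (b i)‖ ^ 2) ↔ ∑' i, (‖S (b i)‖₊ : ℝ≥0∞) ^ 2 ≠ ⊤ := by
  have e : (fun i => ((‖S (b i)‖₊ : ℝ≥0∞)) ^ 2) = fun i => ((‖S (b i)‖₊ ^ 2 : ℝ≥0) : ℝ≥0∞) := by
    push_cast; rfl
  rw [e, ENNReal.tsum_coe_ne_top_iff_summable, ← NNReal.summable_coe]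
  push_cast
  rfl

private lemma stmt5_hs_double {ι : Type} (b : HilbertBasis ι ℂ K) (S : K →L[ℂ] K) :
    ∑' i, (‖S (b i)‖₊ : ℝ≥0∞) ^ 2 = ∑' j, (‖adjoint S (b j)‖₊ : ℝ≥0∞) ^ 2 := by
  calc ∑' i, (‖S (b i)‖₊ : ℝ≥0∞) ^ 2
      = ∑' i, ∑' j, (‖⟪b j, S (b i)⟫‖₊ : ℝ≥0∞) ^ 2 :=
        tsum_congr fun i => (stmt5_parseval_ennreal b (S (b i))).symm
    _ = ∑' j, ∑' i, (‖⟪b j, S (b i)⟫‖₊ : ℝ≥0∞) ^ 2 := ENNReal.tsum_comm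
    _ = ∑' j, ∑' i, (‖⟪b i, adjoint S (b j)⟫‖₊ : ℝ≥0∞) ^ 2 := by
        refine tsum_congr fun j => tsum_congr fun i => ?_
        have h3 : ‖⟪b i, adjoint S (b j)⟫‖₊ = ‖⟪b j, S (b i)⟫‖₊ := by
          rw [adjoint_inner_right]
          exact NNReal.eq (norm_inner_symm (𝕜 := ℂ) _ _)
        rw [h3]
    _ = ∑' j, (‖adjoint S (b j)‖₊ : ℝ≥0∞) ^ 2 :=
        tsum_congr fun j => stmt5_parseval_ennreal b _

private lemma stmt5_good_adjoint {ι : Type} (b : HilbertBasis ι ℂ K) (S : K →L[ℂ] K)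
    (h : Summable fun i => ‖S (b i)‖ ^ 2) :
    Summable fun i => ‖adjoint S (b i)‖ ^ 2 := by
  rw [stmt5_summable_iff] at h ⊢
  rwa [← stmt5_hs_double]

private lemma stmt5_good_compL {ι : Type} (b : HilbertBasis ι ℂ K) (A S : K →L[ℂ] K)
    (h : Summable fun i => ‖S (b i)‖ ^ 2) :
    Summable fun i => ‖(A * S) (b i)‖ ^ 2 := by
  refine Summable.of_nonneg_of_le (fun i => sq_nonneg _) (fun i => ?_) (h.mul_left (‖A‖ ^ 2))
  rw [ContinuousLinearMap.mul_apply, ← mul_pow]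
  exact pow_le_pow_left₀ (norm_nonneg _) (A.le_opNorm _) 2

private lemma stmt5_good_compR {ι : Type} (b : HilbertBasis ι ℂ K) (S A : K →L[ℂ] K)
    (h : Summable fun i => ‖S (b i)‖ ^ 2) :
    Summable fun i => ‖(S * A) (b i)‖ ^ 2 := by
  have h2 := stmt5_good_adjoint b _
    (stmt5_good_compL b (adjoint A) (adjoint S) (stmt5_good_adjoint b S h))
  have e : adjoint (adjoint A * adjoint S) = S * A := by
    rw [mul_def, adjoint_comp, adjoint_adjoint, adjoint_adjoint, mul_def]
  rwa [e] at h2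

private lemma stmt5_good_add {ι : Type} (b : HilbertBasis ι ℂ K) (S R : K →L[ℂ] K)
    (hS : Summable fun i => ‖S (b i)‖ ^ 2) (hR : Summable fun i => ‖R (b i)‖ ^ 2) :
    Summable fun i => ‖(S + R) (b i)‖ ^ 2 := by
  refine Summable.of_nonneg_of_le (fun i => sq_nonneg _) (fun i => ?_)
    ((hS.mul_left 2).add (hR.mul_left 2))
  have h1 := norm_add_le (S (b i)) (R (b i))
  have h2 : ‖(S + R) (b i)‖ = ‖S (b i) + R (b i)‖ := by simp
  rw [h2]
  nlinarith [norm_nonneg (S (b i) + R (b i)), norm_nonneg (S (b i)), norm_nonneg (R (b i)),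
    sq_nonneg (‖S (b i)‖ - ‖R (b i)‖)]

private lemma stmt5_good_sub {ι : Type} (b : HilbertBasis ι ℂ K) (S R : K →L[ℂ] K)
    (hS : Summable fun i => ‖S (b i)‖ ^ 2) (hR : Summable fun i => ‖R (b i)‖ ^ 2) :
    Summable fun i => ‖(S - R) (b i)‖ ^ 2 := by
  have hnR : Summable fun i => ‖(-R) (b i)‖ ^ 2 := by simpa using hR
  simpa [sub_eq_add_neg] using stmt5_good_add b S (-R) hS hnR

variable (J : K ≃ₗᵢ⋆[ℂ] K)

private lemma stmt5_conjOp_apply (A : K →L[ℂ] K) (f : K) : conjOp J A f = J (A (J f)) := rfl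

private lemma stmt5_conjOp_mul (hJ : ∀ f, J (J f) = f) (A B : K →L[ℂ] K) :
    conjOp J (A * B) = conjOp J A * conjOp J B := by
  ext f; simp [stmt5_conjOp_apply, mul_apply, hJ]

private lemma stmt5_conjOp_add (A B : K →L[ℂ] K) :
    conjOp J (A + B) = conjOp J A + conjOp J B := by
  ext f; simp [stmt5_conjOp_apply]

private lemma stmt5_conjOp_neg (A : K →L[ℂ] K) : conjOp J (-A) = -(conjOp J A) := by
  ext f; simp [stmt5_conjOp_apply]

private lemma stmt5_conjOp_involutive (hJ : ∀ f, J (J f) = f) (A : K →L[ℂ] K) :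
    conjOp J (conjOp J A) = A := by
  ext f; simp [stmt5_conjOp_apply, hJ]

end Aux

/-- For an antisymmetric Hilbert–Schmidt `T : K₁ → K₂`, the operator
`P_T = (P₁+T)(P₁+T*T)⁻¹(P₁+T*)` is a basis projection with range `ran (P₁+T)`
and `P₁ - P_T` Hilbert–Schmidt. `X` is the inverse of `P₁ + T*T` on `K₁`, extended by 0. -/
theorem stmt5 {K : Type*} [NormedAddCommGroup K] [InnerProductSpace ℂ K] [CompleteSpace K]
    (J : K ≃ₗᵢ⋆[ℂ] K) (hJ : ∀ f, J (J f) = f)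
    (P₁ : K →L[ℂ] K) (hP₁sa : IsSelfAdjoint P₁) (hP₁idem : P₁ ∘L P₁ = P₁)
    (hP₁conj : conjOp J P₁ = 1 - P₁)
    (T : K →L[ℂ] K) (hTsupp : T = (1 - P₁) ∘L T ∘L P₁)
    (hTanti : conjOp J (adjoint T) = -T) (hTHS : IsHS T)
    (X : K →L[ℂ] K)
    (hX1 : (P₁ + adjoint T ∘L T) ∘L X = P₁)
    (hX2 : X ∘L (P₁ + adjoint T ∘L T) = P₁)
    (hX3 : X = P₁ ∘L X ∘L P₁) :
    IsSelfAdjoint ((P₁ + T) ∘L X ∘L (P₁ + adjoint T)) ∧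
      ((P₁ + T) ∘L X ∘L (P₁ + adjoint T)) ∘L ((P₁ + T) ∘L X ∘L (P₁ + adjoint T)) =
        (P₁ + T) ∘L X ∘L (P₁ + adjoint T) ∧
      conjOp J ((P₁ + T) ∘L X ∘L (P₁ + adjoint T)) =
        1 - (P₁ + T) ∘L X ∘L (P₁ + adjoint T) ∧
      LinearMap.range (((P₁ + T) ∘L X ∘L (P₁ + adjoint T) : K →L[ℂ] K) : K →ₗ[ℂ] K) = LinearMap.range ((P₁ + T : K →L[ℂ] K) : K →ₗ[ℂ] K) ∧
      IsHS (P₁ - (P₁ + T) ∘L X ∘L (P₁ + adjoint T)) := by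
  simp only [← ContinuousLinearMap.mul_def] at hP₁idem hTsupp hX1 hX2 hX3 ⊢
  simp only [← mul_assoc]
  set Q : K →L[ℂ] K := adjoint T with hQdef
  set Y : K →L[ℂ] K := conjOp J X with hYdef
  -- basic multiplicative facts
  have hP10 : P₁ * (1 - P₁) = 0 := by rw [mul_sub, mul_one, hP₁idem, sub_self]
  have f1 : P₁ * T = 0 := by
    rw [hTsupp, ← mul_assoc, hP10, zero_mul]
  have f2 : T * P₁ = T := by
    conv_lhs => rw [hTsupp]
    rw [mul_assoc, mul_assoc, hP₁idem, ← hTsupp]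
  have hsT : star T = Q := star_eq_adjoint T
  have hsQ : star Q = T := by rw [hQdef, star_eq_adjoint, adjoint_adjoint]
  have f3 : Q * P₁ = 0 := by
    simpa [star_mul, hP₁sa.star_eq, hsT] using congrArg star f1
  have f4 : P₁ * Q = Q := by
    simpa [star_mul, hP₁sa.star_eq, hsT] using congrArg star f2
  have f5 : X * P₁ = X := by
    conv_lhs => rw [hX3]
    rw [mul_assoc, mul_assoc, hP₁idem, ← hX3]
  have f6 : P₁ * X = X := by
    conv_lhs => rw [hX3]
    rw [← mul_assoc, hP₁idem, ← hX3]
  -- X is selfadjoint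
  have hsQT : star (P₁ + Q * T) = P₁ + Q * T := by
    simp [star_add, star_mul, hsT, hsQ, hP₁sa.star_eq]
  have s1 : star X * (P₁ + Q * T) = P₁ := by
    have h := congrArg star hX1
    rwa [star_mul, hsQT, hP₁sa.star_eq] at h
  have s2 : star X * P₁ = star X := by
    have h := congrArg star hX3
    rw [star_mul, star_mul, hP₁sa.star_eq] at h
    conv_lhs => rw [h]
    rw [mul_assoc, hP₁idem, ← h]
  have hXsa : star X = X := by
    calc star X = star X * P₁ := s2.symm
      _ = star X * ((P₁ + Q * T) * X) := by rw [hX1]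
      _ = (star X * (P₁ + Q * T)) * X := (mul_assoc _ _ _).symm
      _ = P₁ * X := by rw [s1]
      _ = X := f6
  -- part 1: selfadjoint
  have part1 : IsSelfAdjoint ((P₁ + T) * X * (P₁ + Q)) := by
    show star ((P₁ + T) * X * (P₁ + Q)) = (P₁ + T) * X * (P₁ + Q)
    simp [star_mul, star_add, hP₁sa.star_eq, hsT, hsQ, hXsa, mul_assoc]
  -- part 2: idempotent
  have m1 : (P₁ + Q) * (P₁ + T) = P₁ + Q * T := by
    simp [add_mul, mul_add, hP₁idem, f1, f3]
  have hmid : (P₁ + Q) * ((P₁ + T) * X) = P₁ := by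
    rw [← mul_assoc, m1, hX1]
  have part2 : ((P₁ + T) * X * (P₁ + Q)) * ((P₁ + T) * X * (P₁ + Q)) =
      (P₁ + T) * X * (P₁ + Q) := by
    calc ((P₁ + T) * X * (P₁ + Q)) * ((P₁ + T) * X * (P₁ + Q))
        = ((P₁ + T) * X) * ((P₁ + Q) * ((P₁ + T) * X)) * (P₁ + Q) := by
          simp only [mul_assoc]
      _ = ((P₁ + T) * X) * P₁ * (P₁ + Q) := by rw [hmid]
      _ = (P₁ + T) * X * (P₁ + Q) := by rw [mul_assoc (P₁ + T) X P₁, f5]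
  -- conjugated facts
  have cT : conjOp J T = -Q := by
    have h := congrArg (conjOp J) hTanti
    rw [stmt5_conjOp_involutive J hJ, stmt5_conjOp_neg] at h
    rw [h, neg_neg]
  have cQT : conjOp J (P₁ + Q * T) = (1 - P₁) + T * Q := by
    rw [stmt5_conjOp_add, stmt5_conjOp_mul J hJ, hP₁conj, hTanti, cT, neg_mul_neg]
  have cX1 : ((1 - P₁) + T * Q) * Y = 1 - P₁ := by
    have h := congrArg (conjOp J) hX1
    rwa [stmt5_conjOp_mul J hJ, cQT, hP₁conj, ← hYdef] at h
  have cX2 : Y * ((1 - P₁) + T * Q) = 1 - P₁ := by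
    have h := congrArg (conjOp J) hX2
    rwa [stmt5_conjOp_mul J hJ, cQT, hP₁conj, ← hYdef] at h
  have hP2idem : (1 - P₁) * (1 - P₁) = 1 - P₁ := by
    have h : (1 - P₁) * (1 - P₁) = 1 - P₁ - P₁ + P₁ * P₁ := by noncomm_ring
    rw [h, hP₁idem]; abel
  have cX3 : Y = (1 - P₁) * Y * (1 - P₁) := by
    have h := congrArg (conjOp J) hX3
    rwa [stmt5_conjOp_mul J hJ, stmt5_conjOp_mul J hJ, hP₁conj, ← hYdef] at h
  have cY2 : Y * (1 - P₁) = Y := by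
    conv_lhs => rw [cX3]
    rw [mul_assoc, hP2idem, ← cX3]
  have cY1 : (1 - P₁) * Y = Y := by
    conv_lhs => rw [cX3]
    rw [← mul_assoc, ← mul_assoc, hP2idem, ← cX3]
  -- key exchange identities
  have e1 : X + Q * (T * X) = P₁ := by
    have h := hX1
    rwa [add_mul, f6, mul_assoc] at h
  have e2 : Y + T * (Q * Y) = 1 - P₁ := by
    have h := cX1
    rwa [add_mul, cY1, mul_assoc] at h
  have hTP : (1 - P₁) * T = T := by rw [sub_mul, one_mul, f1, sub_zero]
  have key1 : Y * T = T * X := by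
    have hT2 : ((1 - P₁) + T * Q) * (T * X) = T := by
      calc ((1 - P₁) + T * Q) * (T * X)
          = (1 - P₁) * (T * X) + T * Q * (T * X) := by rw [add_mul]
        _ = T * X + T * (Q * (T * X)) := by
            rw [← mul_assoc (1 - P₁) T X, hTP, mul_assoc T Q (T * X)]
        _ = T * (X + Q * (T * X)) := by rw [mul_add]
        _ = T * P₁ := by rw [e1]
        _ = T := f2
    calc Y * T = Y * (((1 - P₁) + T * Q) * (T * X)) := by rw [hT2]
      _ = (Y * ((1 - P₁) + T * Q)) * (T * X) := (mul_assoc _ _ _).symm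
      _ = (1 - P₁) * (T * X) := by rw [cX2]
      _ = T * X := by rw [← mul_assoc, hTP]
  have hQP2 : Q * (1 - P₁) = Q := by rw [mul_sub, mul_one, f3, sub_zero]
  have hQ2 : Q * ((1 - P₁) + T * Q) = (P₁ + Q * T) * Q := by
    simp [mul_add, add_mul, hQP2, f4, mul_assoc]
  have key2 : X * Q = Q * Y := by
    calc X * Q = X * (Q * (1 - P₁)) := by rw [hQP2]
      _ = X * (Q * (((1 - P₁) + T * Q) * Y)) := by rw [cX1]
      _ = X * ((Q * ((1 - P₁) + T * Q)) * Y) := by rw [← mul_assoc Q _ Y]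
      _ = X * (((P₁ + Q * T) * Q) * Y) := by rw [hQ2]
      _ = (X * (P₁ + Q * T)) * (Q * Y) := by simp only [mul_assoc]
      _ = P₁ * (Q * Y) := by rw [hX2]
      _ = (P₁ * Q) * Y := (mul_assoc _ _ _).symm
      _ = Q * Y := by rw [f4]
  -- expansion of P
  have hPexp : (P₁ + T) * X * (P₁ + Q) = X + X * Q + T * X + T * (X * Q) := by
    have h1 : (P₁ + T) * X = X + T * X := by rw [add_mul, f6]
    rw [h1]
    simp only [add_mul, mul_add, mul_assoc, f5]
    abel
  -- part 3: conjugation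
  have hCexp : ((1 - P₁) + -Q) * Y * ((1 - P₁) + -T)
      = Y - T * X - Q * Y + Q * (T * X) := by
    simp only [add_mul, mul_add, neg_mul, mul_neg, mul_assoc, cY1, cY2, key1]
    abel
  have part3 : conjOp J ((P₁ + T) * X * (P₁ + Q)) = 1 - (P₁ + T) * X * (P₁ + Q) := by
    have hC : conjOp J ((P₁ + T) * X * (P₁ + Q))
        = ((1 - P₁) + -Q) * Y * ((1 - P₁) + -T) := by
      rw [stmt5_conjOp_mul J hJ, stmt5_conjOp_mul J hJ, stmt5_conjOp_add, stmt5_conjOp_add,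
        hP₁conj, cT, hTanti, ← hYdef]
    have hsum : ((1 - P₁) + -Q) * Y * ((1 - P₁) + -T) + (P₁ + T) * X * (P₁ + Q) = 1 := by
      have hx : ((1 - P₁) + -Q) * Y * ((1 - P₁) + -T) + (P₁ + T) * X * (P₁ + Q)
          = (X + Q * (T * X)) + (Y + T * (Q * Y)) := by
        rw [hCexp, hPexp, key2]
        abel
      rw [hx, e1, e2]
      abel
    rw [hC]
    exact eq_sub_of_add_eq hsum
  -- part 4: range
  have hr : ((P₁ + T) * X * (P₁ + Q)) * (P₁ + T) = P₁ + T := by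
    calc ((P₁ + T) * X * (P₁ + Q)) * (P₁ + T)
        = ((P₁ + T) * X) * ((P₁ + Q) * (P₁ + T)) := by simp only [mul_assoc]
      _ = ((P₁ + T) * X) * (P₁ + Q * T) := by rw [m1]
      _ = (P₁ + T) * (X * (P₁ + Q * T)) := mul_assoc _ _ _
      _ = (P₁ + T) * P₁ := by rw [hX2]
      _ = P₁ + T := by rw [add_mul, hP₁idem, f2]
  have part4 : LinearMap.range (((P₁ + T) * X * (P₁ + Q) : K →L[ℂ] K) : K →ₗ[ℂ] K) = LinearMap.range ((P₁ + T : K →L[ℂ] K) : K →ₗ[ℂ] K) := by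
    ext y
    simp only [LinearMap.mem_range]
    constructor
    · rintro ⟨x, rfl⟩
      exact ⟨X ((P₁ + Q) x), by simp [ContinuousLinearMap.mul_apply]⟩
    · rintro ⟨x, rfl⟩
      refine ⟨(P₁ + T) x, ?_⟩
      have h := ContinuousLinearMap.ext_iff.mp hr x
      simpa [ContinuousLinearMap.mul_apply] using h
  -- part 5: Hilbert-Schmidt
  obtain ⟨ι, b, hb⟩ := hTHS
  have hfinal : P₁ - (P₁ + T) * X * (P₁ + Q)
      = Q * (T * X) - X * Q - T * X - T * (X * Q) := by
    rw [hPexp, ← e1]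
    abel
  have gT : Summable fun i => ‖T (b i)‖ ^ 2 := hb
  have gQ : Summable fun i => ‖Q (b i)‖ ^ 2 := stmt5_good_adjoint b T gT
  have gTX : Summable fun i => ‖(T * X) (b i)‖ ^ 2 := stmt5_good_compR b T X gT
  have gQTX : Summable fun i => ‖(Q * (T * X)) (b i)‖ ^ 2 := stmt5_good_compL b Q (T * X) gTX
  have gXQ : Summable fun i => ‖(X * Q) (b i)‖ ^ 2 := stmt5_good_compL b X Q gQ
  have gTXQ : Summable fun i => ‖(T * (X * Q)) (b i)‖ ^ 2 := stmt5_good_compL b T (X * Q) gXQ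
  have part5 : IsHS (P₁ - (P₁ + T) * X * (P₁ + Q)) := by
    refine ⟨ι, b, ?_⟩
    rw [hfinal]
    exact stmt5_good_sub b _ _ (stmt5_good_sub b _ _ (stmt5_good_sub b _ _ gQTX gXQ) gTX) gTXQ
  exact ⟨part1, part2, part3, part4, part5⟩
end

section
/- Let V be a bounded operator on a complex Hilbert space K with an indefinite nondegenerate hermitian form κ(f,g) = ⟨f, Cg⟩ where C is a self-adjoint unitary, satisfying V†V = 1 where V† = CV*C, and commuting with a conjugation compatible with κ. Then ker V† is closed, the restriction of κ to ker V† is nondegenerate, and consequently dim ker V† is even (or infinite); hence ind V = -dim ker V† is always even. -/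
open ContinuousLinearMap Matrix

lemma conjOp_apply {K : Type*} [NormedAddCommGroup K] [InnerProductSpace ℂ K]
    (J : K ≃ₗᵢ⋆[ℂ] K) (A : K →L[ℂ] K) (f : K) : conjOp J A f = J (A (J f)) := rfl

lemma conj_inner_map {K : Type*} [NormedAddCommGroup K] [InnerProductSpace ℂ K]
    (J : K ≃ₗᵢ⋆[ℂ] K) (x y : K) :
    (inner ℂ (J x) (J y) : ℂ) = inner ℂ y x := by
  have hs : ∀ (z : K), Complex.I • J z = -J (Complex.I • z) := by
    intro z
    rw [J.map_smulₛₗ]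
    simp [Complex.conj_I]
  rw [inner_eq_sum_norm_sq_div_four (𝕜 := ℂ) (J x) (J y),
      inner_eq_sum_norm_sq_div_four (𝕜 := ℂ) y x]
  have h1 : ‖J x + J y‖ = ‖y + x‖ := by
    rw [← map_add, J.norm_map, add_comm]
  have h2 : ‖J x - J y‖ = ‖y - x‖ := by
    rw [← map_sub, J.norm_map, norm_sub_rev]
  have h3 : ‖J x - Complex.I • J y‖ = ‖y - Complex.I • x‖ := by
    rw [hs, sub_neg_eq_add, ← map_add, J.norm_map]
    have : y - Complex.I • x = -(Complex.I • (x + Complex.I • y)) := by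
      rw [smul_add, smul_smul, Complex.I_mul_I, neg_add, neg_one_smul, neg_neg]
      abel
    rw [this, norm_neg, norm_smul]
    simp
  have h4 : ‖J x + Complex.I • J y‖ = ‖y + Complex.I • x‖ := by
    rw [hs, ← sub_eq_add_neg, ← map_sub, J.norm_map]
    have : y + Complex.I • x = Complex.I • (x - Complex.I • y) := by
      rw [smul_sub, smul_smul, Complex.I_mul_I, neg_one_smul, sub_neg_eq_add]
      abel
    rw [this, norm_smul]
    simp
  simp only [RCLike.I_to_complex] at *
  rw [h1, h2, h3, h4]

lemma even_finrank_of_alt {W : Type*} [AddCommGroup W] [Module ℂ W] [FiniteDimensional ℂ W]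
    (B : LinearMap.BilinForm ℂ W) (hskew : ∀ x y, B x y = -(B y x))
    (hnd : B.Nondegenerate) : Even (Module.finrank ℂ W) := by
  classical
  let b := Module.finBasis ℂ W
  have hdet : (LinearMap.BilinForm.toMatrix b B).det ≠ 0 :=
    (LinearMap.BilinForm.nondegenerate_iff_det_ne_zero b).mp hnd
  have hT : (LinearMap.BilinForm.toMatrix b B)ᵀ = -(LinearMap.BilinForm.toMatrix b B) := by
    ext i j
    simp only [Matrix.transpose_apply, LinearMap.BilinForm.toMatrix_apply, Matrix.neg_apply]
    exact hskew (b j) (b i)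
  have h1 : (LinearMap.BilinForm.toMatrix b B).det
      = (-1 : ℂ) ^ (Module.finrank ℂ W) * (LinearMap.BilinForm.toMatrix b B).det := by
    conv_lhs => rw [← Matrix.det_transpose, hT]
    rw [Matrix.det_neg]
    simp
  have h2 : ((-1 : ℂ)) ^ (Module.finrank ℂ W) = 1 :=
    mul_right_cancel₀ hdet (h1.symm.trans (one_mul _).symm)
  exact (neg_one_pow_eq_one_iff_even (by norm_num : (-1 : ℂ) ≠ 1)).mp h2

set_option maxHeartbeats 1000000 in
/-- For a CCR Bogoliubov operator `V` (i.e. `V†V = 1` with `V† = CV*C`, commuting with a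
conjugation compatible with `κ`), `ker V†` is closed, `κ(f,g) = ⟪f, Cg⟫` restricted to
`ker V†` is nondegenerate, and `dim ker V†` is even (or infinite), i.e. `ind V` is even. -/
theorem stmt12 {K : Type*} [NormedAddCommGroup K] [InnerProductSpace ℂ K] [CompleteSpace K]
    (J : K ≃ₗᵢ⋆[ℂ] K) (hJ : ∀ f, J (J f) = f)
    (P₁ : K →L[ℂ] K) (hP₁sa : IsSelfAdjoint P₁) (hP₁idem : P₁ ∘L P₁ = P₁)
    (C : K →L[ℂ] K) (hC : C = P₁ - (1 - P₁)) (hCJ : conjOp J C = -C)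
    (V : K →L[ℂ] K) (hV : (C ∘L adjoint V ∘L C) ∘L V = 1) (hVconj : conjOp J V = V) :
    IsClosed ((LinearMap.ker (C ∘L adjoint V ∘L C : K →ₗ[ℂ] K) : Submodule ℂ K) : Set K) ∧
      (∀ f ∈ LinearMap.ker (C ∘L adjoint V ∘L C : K →ₗ[ℂ] K),
        (∀ g ∈ LinearMap.ker (C ∘L adjoint V ∘L C : K →ₗ[ℂ] K), (inner ℂ f (C g) : ℂ) = 0) → f = 0) ∧
      ∃ m : Cardinal, Module.rank ℂ ↥(LinearMap.ker (C ∘L adjoint V ∘L C : K →ₗ[ℂ] K)) = 2 * m := by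
  set D : K →L[ℂ] K := C ∘L adjoint V ∘L C with hD
  -- basic facts about C
  have hCsa : IsSelfAdjoint C := by
    rw [hC]
    exact hP₁sa.sub ((IsSelfAdjoint.one (K →L[ℂ] K)).sub hP₁sa)
  have hCadj : adjoint C = C := hCsa.adjoint_eq
  have hCinner : ∀ x y : K, (inner ℂ (C x) y : ℂ) = inner ℂ x (C y) := by
    intro x y
    conv_lhs => rw [← hCadj]
    exact adjoint_inner_left C y x
  have hCC : ∀ x : K, C (C x) = x := by
    have hC2 : C ∘L C = 1 := by
      have hm : P₁ * P₁ = P₁ := hP₁idem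
      show C * C = 1
      rw [hC]
      have : (P₁ - (1 - P₁)) * (P₁ - (1 - P₁))
          = 4 * (P₁ * P₁) - 4 * P₁ + 1 := by noncomm_ring
      rw [this, hm]
      noncomm_ring
    intro x
    have := DFunLike.congr_fun hC2 x
    simpa using this
  have hDapp : ∀ x : K, D x = C (adjoint V (C x)) := fun x => rfl
  have hDV : ∀ x : K, D (V x) = x := by
    intro x
    have := DFunLike.congr_fun hV x
    simpa using this
  -- Part 1 : closedness
  have part1 : IsClosed ((LinearMap.ker (D : K →ₗ[ℂ] K) : Submodule ℂ K) : Set K) := by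
    exact ContinuousLinearMap.isClosed_ker D
  -- Part 2 : nondegeneracy
  have part2 : ∀ f ∈ LinearMap.ker (D : K →ₗ[ℂ] K),
      (∀ g ∈ LinearMap.ker (D : K →ₗ[ℂ] K), (inner ℂ f (C g) : ℂ) = 0) → f = 0 := by
    intro f hf h0
    have hfD : D f = 0 := hf
    have key : ∀ g : K, (inner ℂ f (C g) : ℂ) = 0 := by
      intro g
      have hg1 : g - V (D g) ∈ LinearMap.ker (D : K →ₗ[ℂ] K) := by
        rw [LinearMap.mem_ker, ContinuousLinearMap.coe_coe, map_sub, hDV, sub_self]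
      have e1 := h0 _ hg1
      have e2 : (inner ℂ f (C (V (D g))) : ℂ) = 0 := by
        calc (inner ℂ f (C (V (D g))) : ℂ)
            = inner ℂ (C f) (V (D g)) := (hCinner f _).symm
          _ = inner ℂ (adjoint V (C f)) (D g) := (adjoint_inner_left V (D g) (C f)).symm
          _ = inner ℂ (adjoint V (C f)) (C (adjoint V (C g))) := by rw [hDapp]
          _ = inner ℂ (C (adjoint V (C f))) (adjoint V (C g)) := (hCinner _ _).symm
          _ = inner ℂ (D f) (adjoint V (C g)) := by rw [hDapp]
          _ = 0 := by rw [hfD, inner_zero_left]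
      calc (inner ℂ f (C g) : ℂ)
          = inner ℂ f (C ((g - V (D g)) + V (D g))) := by rw [sub_add_cancel]
        _ = inner ℂ f (C (g - V (D g))) + inner ℂ f (C (V (D g))) := by
            rw [map_add, inner_add_right]
        _ = 0 := by rw [e1, e2, add_zero]
    have hff : (inner ℂ f f : ℂ) = 0 := by
      have := key (C f)
      rwa [hCC] at this
    exact inner_self_eq_zero.mp hff
  refine ⟨part1, part2, ?_⟩
  -- Part 3 : evenness
  have hJswap : ∀ x y : K, (inner ℂ (J x) y : ℂ) = inner ℂ (J y) x := by
    intro x y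
    calc (inner ℂ (J x) y : ℂ) = inner ℂ (J x) (J (J y)) := by rw [hJ]
      _ = inner ℂ (J y) x := conj_inner_map J x (J y)
  have hJC : ∀ x : K, J (C x) = -C (J x) := by
    intro x
    have h1 : J (C (J x)) = -(C x) := by
      have := DFunLike.congr_fun hCJ x
      simpa [conjOp_apply] using this
    have h2 := congrArg J h1
    rw [hJ] at h2
    rw [h2, map_neg, neg_neg]
  have hVJ : ∀ x : K, V (J x) = J (V x) := by
    intro x
    have h1 : J (V (J x)) = V x := by
      have := DFunLike.congr_fun hVconj x
      simpa [conjOp_apply] using this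
    have := congrArg J h1
    rwa [hJ] at this
  have hAdjConj : conjOp J (adjoint V) = adjoint V := by
    rw [eq_adjoint_iff]
    intro x y
    calc (inner ℂ (conjOp J (adjoint V) x) y : ℂ)
        = inner ℂ (J (adjoint V (J x))) y := by rw [conjOp_apply]
      _ = inner ℂ (J y) (adjoint V (J x)) := hJswap _ _
      _ = inner ℂ (V (J y)) (J x) := adjoint_inner_right V _ _
      _ = inner ℂ (J (V y)) (J x) := by rw [hVJ]
      _ = inner ℂ x (V y) := conj_inner_map J (V y) x
  have hVadjJ : ∀ x : K, adjoint V (J x) = J (adjoint V x) := by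
    intro x
    have h1 : J (adjoint V (J x)) = adjoint V x := by
      have := DFunLike.congr_fun hAdjConj x
      simpa [conjOp_apply] using this
    have := congrArg J h1
    rwa [hJ] at this
  have hCJ' : ∀ x : K, C (J x) = -J (C x) := by
    intro x
    rw [hJC, neg_neg]
  have hDJ : ∀ x : K, D (J x) = J (D x) := by
    intro x
    rw [hDapp, hDapp, hCJ', map_neg, hVadjJ, map_neg, hCJ', neg_neg]
  -- the kernel is J-invariant
  have hWJ : ∀ x : K, x ∈ LinearMap.ker (D : K →ₗ[ℂ] K) → J x ∈ LinearMap.ker (D : K →ₗ[ℂ] K) := by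
    intro x hx
    have : D x = 0 := hx
    rw [LinearMap.mem_ker, ContinuousLinearMap.coe_coe, hDJ, this, map_zero]
  -- the bilinear form
  set W := LinearMap.ker (D : K →ₗ[ℂ] K) with hW
  let B : LinearMap.BilinForm ℂ W := LinearMap.mk₂ ℂ
    (fun f g => (inner ℂ (J (f : K)) (C (g : K)) : ℂ))
    (fun m₁ m₂ n => by
      simp only [Submodule.coe_add, map_add, inner_add_left])
    (fun c m n => by
      simp only [Submodule.coe_smul, LinearIsometryEquiv.map_smulₛₗ, inner_smul_left,
        starRingEnd_apply, star_star, smul_eq_mul])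
    (fun m n₁ n₂ => by
      simp only [Submodule.coe_add, map_add, inner_add_right])
    (fun c m n => by
      simp only [Submodule.coe_smul, _root_.map_smul, inner_smul_right, smul_eq_mul])
  have hBapply : ∀ f g : W, B f g = (inner ℂ (J (f : K)) (C (g : K)) : ℂ) := fun f g => rfl
  have hskew : ∀ x y : W, B x y = -(B y x) := by
    intro x y
    rw [hBapply, hBapply]
    calc (inner ℂ (J (x : K)) (C (y : K)) : ℂ)
        = inner ℂ (J (C (y : K))) (x : K) := hJswap _ _
      _ = inner ℂ (-C (J (y : K))) (x : K) := by rw [hJC]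
      _ = -(inner ℂ (C (J (y : K))) (x : K)) := by rw [inner_neg_left]
      _ = -(inner ℂ (J (y : K)) (C (x : K))) := by rw [hCinner]
  have hndB : B.Nondegenerate := by
    refine (LinearMap.IsRefl.nondegenerate_iff_separatingLeft (fun x y h => by rw [hskew, h, neg_zero])).mpr ?_
    intro x hx
    have hJx : (J (x : K)) ∈ W := hWJ _ x.2
    have : J (x : K) = 0 := by
      apply part2 _ hJx
      intro g hg
      exact hx ⟨g, hg⟩
    have h0 : (x : K) = 0 := by
      have := congrArg J this
      rwa [hJ, map_zero] at this
    exact Subtype.ext h0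
  by_cases hfin : FiniteDimensional ℂ W
  · obtain ⟨k, hk⟩ := even_finrank_of_alt B hskew hndB
    refine ⟨(k : Cardinal), ?_⟩
    rw [← Module.finrank_eq_rank, hk]
    push_cast
    ring
  · refine ⟨Module.rank ℂ W, ?_⟩
    have hinf : Cardinal.aleph0 ≤ Module.rank ℂ W := by
      rw [← not_lt, Module.rank_lt_aleph0_iff]
      exact hfin
    exact (Cardinal.mul_eq_right hinf
      (le_trans ((Cardinal.nat_lt_aleph0 2).le.trans_eq' (by norm_num)) hinf)
      two_ne_zero).symm
end
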